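/- Let f : ℝ → A be a function into a real vector space A, and for x ≠ 0 define δ₁f(x) = (f(x) - f(-x))/x and δ₂f(x) = (f(x) - f(-x))/x² - (2/x) f'(x). Then for any twice differentiable f and x ≠ 0, one has δ₂(δ₁ f)(x) + (δ₂ f)'(x) - δ₂(f')(x) = 0, i.e. δ₂ ∘ δ₁ + [d/dx, δ₂] = 0. -/

import Mathlib

/-- δ₁ f (x) = (f x - f (-x)) / x -/
noncomputable def delta1 {A : Type*} [NormedAddCommGroup A] [NormedSpace ℝ A]
    (f : ℝ → A) (x : ℝ) : A := x⁻¹ • (f x - f (-x))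

/-- δ₂ f (x) = (f x - f (-x)) / x² - (2/x) f'(x) -/
noncomputable def delta2 {A : Type*} [NormedAddCommGroup A] [NormedSpace ℝ A]
    (f : ℝ → A) (x : ℝ) : A := (x ^ 2)⁻¹ • (f x - f (-x)) - (2 / x) • deriv f x

/-!
Write `δ₂ = x⁻¹ (δ₁ - 2∂)`. Since `δ₁ f` is even, `δ₁ (δ₁ f) = 0`, and the product rule applied to
`x · δ₁ f x = f x - f (-x)` gives `x (δ₁ f)' + δ₁ f = f'(x) + f'(-x)`. Expanding the three terms
with these two facts, the second derivatives cancel and what is left is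
`x⁻² (2 f'(x) - (f'(x) + f'(-x)) - (f'(x) - f'(-x))) = 0`.
-/

section DunklRankOne

variable {A : Type*} [NormedAddCommGroup A] [NormedSpace ℝ A] (f : ℝ → A) {x : ℝ}

theorem delta1_neg (x : ℝ) : delta1 f (-x) = delta1 f x := by
  rw [delta1, delta1, neg_neg, inv_neg, neg_smul, ← smul_neg, neg_sub]

theorem delta1_delta1 (x : ℝ) : delta1 (delta1 f) x = 0 := by
  rw [delta1, delta1_neg, sub_self, smul_zero]

theorem delta2_eq_inv_smul (x : ℝ) :
    delta2 f x = x⁻¹ • (delta1 f x - (2 : ℝ) • deriv f x) := by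
  rw [delta2, delta1]
  match_scalars <;> ring

theorem delta2_eq_inv_smul_fun :
    delta2 f = fun y ↦ y⁻¹ • (delta1 f y - (2 : ℝ) • deriv f y) :=
  funext (delta2_eq_inv_smul f)

variable {f}

theorem hasDerivAt_delta1 (hx : x ≠ 0) (hfx : DifferentiableAt ℝ f x)
    (hfnx : DifferentiableAt ℝ f (-x)) :
    HasDerivAt (delta1 f) (x⁻¹ • (deriv f x + deriv f (-x) - delta1 f x)) x := by
  have hodd : HasDerivAt (fun y ↦ f y - f (-y)) (deriv f x + deriv f (-x)) x := by
    have := hfx.hasDerivAt.sub (hfnx.hasDerivAt.scomp x (hasDerivAt_neg' x))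
    rwa [neg_one_smul, sub_neg_eq_add] at this
  refine ((hasDerivAt_inv hx).smul hodd).congr_deriv ?_
  rw [delta1]
  match_scalars <;> field_simp

theorem hasDerivAt_delta2 (hx : x ≠ 0) (hfx : DifferentiableAt ℝ f x)
    (hfnx : DifferentiableAt ℝ f (-x)) (hf'x : DifferentiableAt ℝ (deriv f) x) :
    HasDerivAt (delta2 f)
      (x⁻¹ • (x⁻¹ • (deriv f x + deriv f (-x) - delta1 f x) - (2 : ℝ) • deriv (deriv f) x) +
        (-(x ^ 2)⁻¹) • (delta1 f x - (2 : ℝ) • deriv f x)) x := by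
  rw [delta2_eq_inv_smul_fun]
  exact (hasDerivAt_inv hx).smul
    ((hasDerivAt_delta1 hx hfx hfnx).sub (hf'x.hasDerivAt.const_smul (2 : ℝ)))

theorem delta2_delta1_add_deriv_delta2_sub_delta2_deriv (hx : x ≠ 0)
    (hfx : DifferentiableAt ℝ f x) (hfnx : DifferentiableAt ℝ f (-x))
    (hf'x : DifferentiableAt ℝ (deriv f) x) :
    delta2 (delta1 f) x + deriv (delta2 f) x - delta2 (deriv f) x = 0 := by
  rw [delta2_eq_inv_smul (delta1 f), delta2_eq_inv_smul (deriv f), delta1_delta1,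
    (hasDerivAt_delta2 hx hfx hfnx hf'x).deriv, (hasDerivAt_delta1 hx hfx hfnx).deriv]
  simp only [delta1]
  match_scalars <;> field_simp <;> ring

end DunklRankOne

/-- The operator identity δ₂ ∘ δ₁ + [d/dx, δ₂] = 0, pointwise for x ≠ 0 and C² functions. -/
theorem stmt0 {A : Type*} [NormedAddCommGroup A] [NormedSpace ℝ A]
    (f : ℝ → A) (hf : ContDiff ℝ 2 f) (x : ℝ) (hx : x ≠ 0) :
    delta2 (delta1 f) x + deriv (delta2 f) x - delta2 (deriv f) x = 0 := by
  have hf1 : Differentiable ℝ f := hf.differentiable (by norm_num)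
  have hf2 : Differentiable ℝ (deriv f) :=
    (hf.deriv' (n := 1)).differentiable one_ne_zero
  exact delta2_delta1_add_deriv_delta2_sub_delta2_deriv hx (hf1 x) (hf1 (-x)) (hf2 x)
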